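/- Let V and H be real normed vector spaces, ι : V → H a compact continuous linear operator, and w : H → [0,∞) a continuous function with w(0) = 0 and w(z) > 0 for every z ≠ 0 in H. Let x : [0,∞) → V be a function with sup_{t≥0} ‖x(t)‖_V < ∞ and suppose w(ι(x(t))) → 0 as t → ∞. Then ‖ι(x(t))‖_H → 0 as t → ∞. -/
import Mathlib


/-- Final step of the LaSalle-type theorem: if `ι : V → H` is a compact continuous
linear operator, `w : H → [0,∞)` is continuous with `w(0) = 0` and `w(z) > 0` for
`z ≠ 0`, and `x : [0,∞) → V` is a bounded trajectory with `w(ι(x(t))) → 0`, then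
`‖ι(x(t))‖_H → 0`. -/
theorem tendsto_norm_zero_of_w_tendsto_zero
    {V H : Type*} [NormedAddCommGroup V] [NormedSpace ℝ V]
    [NormedAddCommGroup H] [NormedSpace ℝ H]
    (ι : V →L[ℝ] H)
    (hcpt : ∀ S : Set V, Bornology.IsBounded S → IsCompact (closure (ι '' S)))
    (w : H → ℝ) (hw : Continuous w) (hwnn : ∀ z, 0 ≤ w z)
    (hw0 : w 0 = 0) (hwpos : ∀ z : H, z ≠ 0 → 0 < w z)
    (x : ℝ → V) (C : ℝ) (hbdd : ∀ t ≥ (0 : ℝ), ‖x t‖ ≤ C)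
    (hto0 : Filter.Tendsto (fun t => w (ι (x t))) Filter.atTop (nhds 0)) :
    Filter.Tendsto (fun t => ‖ι (x t)‖) Filter.atTop (nhds 0) := by
  rw [Metric.tendsto_atTop]
  intro ε hε
  set K := closure (ι '' {v : V | ‖v‖ ≤ C}) with hKdef
  have hK : IsCompact K := by
    refine hcpt _ (Metric.isBounded_closedBall (x := (0 : V)) (r := C) |>.subset ?_)
    intro v hv
    simpa [Metric.mem_closedBall] using hv
  have hmem : ∀ t : ℝ, 0 ≤ t → ι (x t) ∈ K := fun t ht =>
    subset_closure ⟨x t, hbdd t ht, rfl⟩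
  set K' := K ∩ {z : H | ε ≤ ‖z‖} with hK'def
  have hK'cpt : IsCompact K' :=
    hK.inter_right (isClosed_le continuous_const continuous_norm)
  by_cases hne : K'.Nonempty
  · obtain ⟨z₀, hz₀K, hz₀min⟩ := hK'cpt.exists_isMinOn hne hw.continuousOn
    have hz₀ne : z₀ ≠ 0 := by
      intro h
      have := hz₀K.2
      rw [h] at this
      simp only [Set.mem_setOf_eq, norm_zero] at this
      linarith
    have hδ : 0 < w z₀ := hwpos _ hz₀ne
    have hev : ∀ᶠ t in Filter.atTop, w (ι (x t)) < w z₀ ∧ (0 : ℝ) ≤ t :=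
      (hto0.eventually (gt_mem_nhds hδ)).and (Filter.eventually_ge_atTop 0)
    obtain ⟨N, hN⟩ := Filter.eventually_atTop.mp hev
    refine ⟨N, fun t ht => ?_⟩
    obtain ⟨hlt, ht0⟩ := hN t ht
    have hnot : ι (x t) ∉ K' := fun hm => absurd (hz₀min hm) (not_le.mpr hlt)
    have : ¬ ε ≤ ‖ι (x t)‖ := fun h => hnot ⟨hmem t ht0, h⟩
    rw [Real.dist_eq, sub_zero, abs_of_nonneg (norm_nonneg _)]
    linarith
  · refine ⟨0, fun t ht => ?_⟩
    have : ¬ ε ≤ ‖ι (x t)‖ := fun h => hne ⟨ι (x t), hmem t ht, h⟩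
    rw [Real.dist_eq, sub_zero, abs_of_nonneg (norm_nonneg _)]
    linarith
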